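/- Let α ∈ (0,1), let (X₁,Y₁), …, (X_{n+1},Y_{n+1}) be exchangeable random pairs taking values in ℝ^D × ℝ (e.g., i.i.d.), and let Q̂_lo, Q̂_hi : ℝ^D → ℝ be fixed measurable functions (estimated lower and upper conditional quantile functions trained on independent data). Define the scores s_i = max( Q̂_lo(X_i) − Y_i , Y_i − Q̂_hi(X_i) ) for i = 1, …, n+1, and let q̂ be the ⌈(n+1)(1−α)⌉-th smallest value among s₁, …, s_n (with q̂ = +∞ if ⌈(n+1)(1−α)⌉ > n). Then P( Q̂_lo(X_{n+1}) − q̂ ≤ Y_{n+1} ≤ Q̂_hi(X_{n+1}) + q̂ ) ≥ 1 − α. -/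

import Mathlib

/-!
The interval covers `Y_{n+1}` exactly when the test score `s_{n+1}` is at most `q̂`, i.e. when
fewer than `k = ⌈(n+1)(1-α)⌉` of the `n+1` scores lie strictly below `s_{n+1}`. Whatever the
scores, at least `k` of the `n+1` indices have this property, and by exchangeability every index
has it with the same probability; that probability is therefore at least `k / (n+1) ≥ 1 - α`.
-/

open MeasureTheory

/-- The `k`-th smallest element (1-indexed) of a multiset of reals. -/
noncomputable def kthSmallest (m : Multiset ℝ) (k : ℕ) : ℝ :=
  (m.sort (· ≤ ·)).getD (k - 1) 0

open scoped ENNReal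
open Finset

theorem List.Pairwise.getElem_lt_iff_lt_countP {α : Type*} [LinearOrder α] {l : List α}
    (hl : l.Pairwise (· ≤ ·)) {i : ℕ} (hi : i < l.length) (t : α) :
    l[i] < t ↔ i < l.countP (· < t) := by
  induction l generalizing i with
  | nil => simp at hi
  | cons a l ih =>
    obtain ⟨ha, hl⟩ := List.pairwise_cons.1 hl
    by_cases hat : a < t
    · cases i with
      | zero => simp [hat]
      | succ j => simp [hat, ih hl]
    · have hge : ∀ b ∈ l, ¬ b < t := fun b hb => not_lt.2 ((not_lt.1 hat).trans (ha b hb))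
      have hzero : l.countP (· < t) = 0 := List.countP_eq_zero.2 (by simpa using hge)
      cases i with
      | zero => simp [hat, hzero]
      | succ j => simp [hat, hzero, hge _ (List.getElem_mem _)]

theorem le_kthSmallest_iff {m : Multiset ℝ} {k : ℕ} (hk₀ : 1 ≤ k) (hk : k ≤ Multiset.card m)
    (t : ℝ) : t ≤ kthSmallest m k ↔ Multiset.card (m.filter (· < t)) < k := by
  have hlen : k - 1 < (m.sort (· ≤ ·)).length := by rw [Multiset.length_sort]; omega
  rw [kthSmallest, List.getD_eq_getElem?_getD, List.getElem?_eq_getElem hlen, Option.getD_some,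
    ← not_lt, (m.pairwise_sort _).getElem_lt_iff_lt_countP hlen, ← Multiset.countP_eq_card_filter,
    ← Multiset.coe_countP, Multiset.sort_eq]
  omega

section strictRank

variable {ι α : Type*} [Fintype ι] [LinearOrder α]

def strictRank (v : ι → α) (j : ι) : ℕ :=
  #{i | v i < v j}

theorem strictRank_comp_perm (v : ι → α) (σ : Equiv.Perm ι) (j : ι) :
    strictRank (v ∘ σ) j = strictRank v (σ j) :=
  Finset.card_equiv σ (by simp)

theorem strictRank_last {n : ℕ} (v : Fin (n + 1) → α) :
    strictRank v (Fin.last n) = #{i : Fin n | v i.castSucc < v (Fin.last n)} := by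
  rw [strictRank, Finset.card_filter, Finset.card_filter, Fin.sum_univ_castSucc]
  simp

theorem le_card_strictRank_lt (v : ι → α) {k : ℕ} (hk : k ≤ Fintype.card ι) :
    k ≤ #{j | strictRank v j < k} := by
  classical
  set T : Finset ι := {j | strictRank v j < k}
  -- otherwise a smallest coordinate outside `T` would itself belong to `T`
  by_contra! hT
  have hne : Tᶜ.Nonempty := by
    rw [← Finset.card_pos, Finset.card_compl]
    omega
  obtain ⟨j, hjT, hmin⟩ := Tᶜ.exists_min_image v hne
  have hbelow : ({i | v i < v j} : Finset ι) ⊆ T := fun i hi => by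
    by_contra hiT
    exact not_lt.2 (hmin i (Finset.mem_compl.2 hiT)) (Finset.mem_filter.1 hi).2
  exact Finset.mem_compl.1 hjT <| Finset.mem_filter.2
    ⟨Finset.mem_univ j, (Finset.card_le_card hbelow).trans_lt hT⟩

end strictRank

theorem measurableSet_strictRank_lt {ι : Type*} [Fintype ι] (j : ι) (k : ℕ) :
    MeasurableSet {v : ι → ℝ | strictRank v j < k} := by
  have : Measurable fun v : ι → ℝ => strictRank v j := by
    simp_rw [strictRank, Finset.card_filter]
    exact Finset.measurable_sum _ fun i _ => Measurable.ite
      (measurableSet_lt (measurable_pi_apply i) (measurable_pi_apply j))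
      measurable_const measurable_const
  exact this (measurableSet_lt measurable_id measurable_const)

open Classical in
theorem natCast_mul_measure_univ_le_sum_measure {Ω ι : Type*} [MeasurableSpace Ω] [Fintype ι]
    {μ : Measure Ω} {A : ι → Set Ω} (hA : ∀ j, MeasurableSet (A j)) {k : ℕ}
    (hk : ∀ ω, k ≤ #{j | ω ∈ A j}) : k * μ Set.univ ≤ ∑ j, μ (A j) := by
  calc k * μ Set.univ = ∫⁻ _, (k : ℝ≥0∞) ∂μ := (lintegral_const _).symm
    _ ≤ ∫⁻ ω, ∑ j, (A j).indicator 1 ω ∂μ := lintegral_mono fun ω => by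
        have hcount : (#{j | ω ∈ A j} : ℝ≥0∞) = ∑ j, (A j).indicator 1 ω := by
          simp only [Finset.card_filter, Nat.cast_sum, Nat.cast_ite, Nat.cast_one, Nat.cast_zero,
            Set.indicator_apply, Pi.one_apply]
        exact hcount ▸ Nat.cast_le.2 (hk ω)
    _ = ∑ j, μ (A j) := by
        rw [lintegral_finsetSum _ fun j _ => measurable_one.indicator (hA j)]
        exact Finset.sum_congr rfl fun j _ => lintegral_indicator_one (hA j)

def Exchangeable {Ω ι β : Type*} [MeasurableSpace Ω] [MeasurableSpace β] (μ : Measure Ω)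
    (Z : ι → Ω → β) : Prop :=
  ∀ σ : Equiv.Perm ι, μ.map (fun ω i => Z (σ i) ω) = μ.map (fun ω i => Z i ω)

namespace Exchangeable

variable {Ω ι β γ : Type*} [MeasurableSpace Ω] [MeasurableSpace β] [MeasurableSpace γ]
  {μ : Measure Ω} {Z : ι → Ω → β}

theorem comp (hZ : Exchangeable μ Z) (hmeas : ∀ i, Measurable (Z i)) {f : β → γ}
    (hf : Measurable f) : Exchangeable μ (fun i ω => f (Z i ω)) := by
  intro σ
  have hf' : Measurable fun (v : ι → β) i => f (v i) :=
    measurable_pi_lambda _ fun i => hf.comp (measurable_pi_apply i)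
  calc μ.map (fun ω i => f (Z (σ i) ω))
      = (μ.map fun ω i => Z (σ i) ω).map fun v i => f (v i) :=
        (Measure.map_map hf' (measurable_pi_lambda _ fun i => hmeas (σ i))).symm
    _ = (μ.map fun ω i => Z i ω).map fun v i => f (v i) := by rw [hZ σ]
    _ = μ.map fun ω i => f (Z i ω) := Measure.map_map hf' (measurable_pi_lambda _ hmeas)

theorem measure_preimage_perm (hZ : Exchangeable μ Z) (hmeas : ∀ i, Measurable (Z i))
    (σ : Equiv.Perm ι) {B : Set (ι → β)} (hB : MeasurableSet B) :
    μ ((fun ω i => Z (σ i) ω) ⁻¹' B) = μ ((fun ω i => Z i ω) ⁻¹' B) := by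
  rw [← Measure.map_apply (measurable_pi_lambda _ fun i => hmeas (σ i)) hB, hZ σ,
    Measure.map_apply (measurable_pi_lambda _ hmeas) hB]

variable [Fintype ι] {S : ι → Ω → ℝ}

theorem measure_strictRank_lt_eq (hS : Exchangeable μ S) (hmeas : ∀ i, Measurable (S i))
    (k : ℕ) (j j' : ι) :
    μ {ω | strictRank (S · ω) j < k} = μ {ω | strictRank (S · ω) j' < k} := by
  classical
  have hswap : ∀ ω, strictRank (fun i => S (Equiv.swap j j' i) ω) j' = strictRank (S · ω) j :=
    fun ω => (strictRank_comp_perm (S · ω) (Equiv.swap j j') j').trans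
      (by rw [Equiv.swap_apply_right])
  simpa only [Set.preimage_ofPred_eq, hswap] using
    hS.measure_preimage_perm hmeas (Equiv.swap j j') (measurableSet_strictRank_lt j' k)

theorem natCast_le_card_mul_measure_strictRank_lt [IsProbabilityMeasure μ]
    (hS : Exchangeable μ S) (hmeas : ∀ i, Measurable (S i)) {k : ℕ} (hk : k ≤ Fintype.card ι)
    (j : ι) : (k : ℝ≥0∞) ≤ Fintype.card ι * μ {ω | strictRank (S · ω) j < k} := by
  have hA : ∀ j', MeasurableSet {ω | strictRank (S · ω) j' < k} := fun j' =>
    measurable_pi_lambda _ hmeas (measurableSet_strictRank_lt j' k)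
  calc (k : ℝ≥0∞) = k * μ Set.univ := by simp
    _ ≤ ∑ j', μ {ω | strictRank (S · ω) j' < k} :=
        natCast_mul_measure_univ_le_sum_measure hA fun ω => by
          simpa only [Set.mem_ofPred_eq] using le_card_strictRank_lt (S · ω) hk
    _ = Fintype.card ι * μ {ω | strictRank (S · ω) j < k} := by
        simp [hS.measure_strictRank_lt_eq hmeas k _ j]

end Exchangeable

theorem le_kthSmallest_iff_strictRank_last_lt {n k : ℕ} (hk₀ : 1 ≤ k) (hk : k ≤ n)
    (v : Fin (n + 1) → ℝ) :
    v (Fin.last n) ≤ kthSmallest (Finset.univ.val.map fun i : Fin n => v i.castSucc) k ↔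
      strictRank v (Fin.last n) < k := by
  rw [le_kthSmallest_iff hk₀ (by simpa using hk), Multiset.filter_map, Multiset.card_map,
    strictRank_last]
  rfl

def cqrScore {E : Type*} (Qlo Qhi : E → ℝ) (z : E × ℝ) : ℝ :=
  max (Qlo z.1 - z.2) (z.2 - Qhi z.1)

theorem measurable_cqrScore {E : Type*} [MeasurableSpace E] {Qlo Qhi : E → ℝ}
    (hQlo : Measurable Qlo) (hQhi : Measurable Qhi) : Measurable (cqrScore Qlo Qhi) :=
  ((hQlo.comp measurable_fst).sub measurable_snd).max
    (measurable_snd.sub (hQhi.comp measurable_fst))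

theorem cqrScore_le_iff {E : Type*} (Qlo Qhi : E → ℝ) (x : E) (y q : ℝ) :
    cqrScore Qlo Qhi (x, y) ≤ q ↔ Qlo x - q ≤ y ∧ y ≤ Qhi x + q :=
  max_le_iff.trans (and_congr sub_le_comm sub_le_iff_le_add')

/-- Marginal coverage of conformalized quantile regression (CQR): for exchangeable pairs
`(X i, Y i)` in `ℝ^D × ℝ` and fixed measurable quantile estimates `Qlo, Qhi`, with scores
`s i = max (Qlo (X i) - Y i) (Y i - Qhi (X i))` and `q̂` the `⌈(n+1)(1-α)⌉`-th smallest
calibration score (`+∞` if `⌈(n+1)(1-α)⌉ > n`), we have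
`P(Qlo(X_{n+1}) - q̂ ≤ Y_{n+1} ≤ Qhi(X_{n+1}) + q̂) ≥ 1 - α`. -/
theorem cqr_marginal_coverage
    {Ω : Type*} [MeasurableSpace Ω] (μ : Measure Ω) [IsProbabilityMeasure μ]
    (D n : ℕ) (α : ℝ) (hα : α ∈ Set.Ioo (0 : ℝ) 1)
    (X : Fin (n + 1) → Ω → (Fin D → ℝ)) (Y : Fin (n + 1) → Ω → ℝ)
    (hXY : ∀ i, Measurable (fun ω => (X i ω, Y i ω)))
    (hexch : ∀ σ : Equiv.Perm (Fin (n + 1)),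
      Measure.map (fun ω => fun i => (X (σ i) ω, Y (σ i) ω)) μ
        = Measure.map (fun ω => fun i => (X i ω, Y i ω)) μ)
    (Qlo Qhi : (Fin D → ℝ) → ℝ) (hQlo : Measurable Qlo) (hQhi : Measurable Qhi) :
    μ {ω |
        ((Qlo (X (Fin.last n) ω) : ℝ) : EReal) -
            (if ⌈((n : ℝ) + 1) * (1 - α)⌉₊ ≤ n
              then ((kthSmallest
                  (Finset.univ.val.map
                    (fun i : Fin n =>
                      max (Qlo (X (Fin.castSucc i) ω) - Y (Fin.castSucc i) ω)
                          (Y (Fin.castSucc i) ω - Qhi (X (Fin.castSucc i) ω))))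
                  ⌈((n : ℝ) + 1) * (1 - α)⌉₊ : ℝ) : EReal)
              else (⊤ : EReal))
          ≤ ((Y (Fin.last n) ω : ℝ) : EReal)
        ∧ ((Y (Fin.last n) ω : ℝ) : EReal)
          ≤ ((Qhi (X (Fin.last n) ω) : ℝ) : EReal) +
            (if ⌈((n : ℝ) + 1) * (1 - α)⌉₊ ≤ n
              then ((kthSmallest
                  (Finset.univ.val.map
                    (fun i : Fin n =>
                      max (Qlo (X (Fin.castSucc i) ω) - Y (Fin.castSucc i) ω)
                          (Y (Fin.castSucc i) ω - Qhi (X (Fin.castSucc i) ω))))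
                  ⌈((n : ℝ) + 1) * (1 - α)⌉₊ : ℝ) : EReal)
              else (⊤ : EReal))}
      ≥ ENNReal.ofReal (1 - α) := by
  obtain ⟨hα₀, hα₁⟩ := hα
  set k := ⌈((n : ℝ) + 1) * (1 - α)⌉₊
  by_cases hkn : k ≤ n
  swap
  · simp only [if_neg hkn, EReal.sub_top, bot_le, true_and,
      EReal.add_top_of_ne_bot (EReal.coe_ne_bot _), le_top, Set.ofPred_true, measure_univ]
    exact ENNReal.ofReal_le_one.2 (by linarith)
  have hk₀ : 1 ≤ k := Nat.one_le_iff_ne_zero.2 (Nat.ceil_pos.2 (by nlinarith)).ne'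
  set S : Fin (n + 1) → Ω → ℝ := fun i ω => cqrScore Qlo Qhi (X i ω, Y i ω)
  have hS : ∀ i, Measurable (S i) := fun i => (measurable_cqrScore hQlo hQhi).comp (hXY i)
  have hscores : Exchangeable μ S :=
    Exchangeable.comp (Z := fun i ω => (X i ω, Y i ω)) hexch hXY (measurable_cqrScore hQlo hQhi)
  have hcover := hscores.natCast_le_card_mul_measure_strictRank_lt hS
    (k := k) (by simpa using hkn.trans n.le_succ) (Fin.last n)
  refine le_trans ?_
    (measure_mono (s := {ω | strictRank (S · ω) (Fin.last n) < k}) fun ω hω => ?_)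
  · rw [← ENNReal.mul_le_mul_iff_right (a := ((n + 1 : ℕ) : ℝ≥0∞)) (by positivity)
      (ENNReal.natCast_ne_top _)]
    calc ((n + 1 : ℕ) : ℝ≥0∞) * ENNReal.ofReal (1 - α)
        = ENNReal.ofReal ((n + 1 : ℕ) * (1 - α)) := by
          rw [ENNReal.ofReal_mul (by positivity), ENNReal.ofReal_natCast]
      _ ≤ ENNReal.ofReal k := ENNReal.ofReal_le_ofReal (by push_cast; exact Nat.le_ceil _)
      _ = k := ENNReal.ofReal_natCast k
      _ ≤ _ := by simpa using hcover
  · simp only [Set.mem_ofPred_eq, if_pos hkn, ← EReal.coe_sub, ← EReal.coe_add,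
      EReal.coe_le_coe_iff, ← cqrScore_le_iff]
    exact (le_kthSmallest_iff_strictRank_last_lt hk₀ hkn (S · ω)).2 hω
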